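/- arXiv:2511.13258 — 2 statements merged into one kernel-verified Lean document; each statement's English description precedes it below -/
import Mathlib

section
/- Let (R, m) be a Noetherian local ring and M a submodule of an R-module L with m·M ≠ 0. Then m·M is a Burch submodule of L, i.e., m·((m·M) :_L m) ≠ m·(m·M). -/
open IsLocalRing

/-- The colon submodule `(N :_L I) = {v ∈ L : I • v ⊆ N}`. -/
def colonSub {R L : Type*} [CommRing R] [AddCommGroup L] [Module R L]
    (N : Submodule R L) (I : Ideal R) : Submodule R L where
  carrier := {v | ∀ r ∈ I, r • v ∈ N}
  add_mem' := by
    intro a b ha hb r hr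
    rw [smul_add]
    exact N.add_mem (ha r hr) (hb r hr)
  zero_mem' := by intro r hr; simp
  smul_mem' := by
    intro c v hv r hr
    rw [smul_comm]
    exact N.smul_mem c (hv r hr)

/-- A submodule `N` of an `R`-module `L` over a local ring `(R, 𝔪)` is Burch if
`𝔪 • (N :_L 𝔪) ≠ 𝔪 • N`. -/
def IsBurchSubmodule {R L : Type*} [CommRing R] [IsLocalRing R]
    [AddCommGroup L] [Module R L] (N : Submodule R L) : Prop :=
  maximalIdeal R • colonSub N (maximalIdeal R) ≠ maximalIdeal R • N

section Colon

variable {R L : Type*} [CommRing R] [AddCommGroup L] [Module R L]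

theorem le_colonSub_smul (I : Ideal R) (N : Submodule R L) : N ≤ colonSub (I • N) I :=
  fun _ hx _ hr => Submodule.smul_mem_smul hr hx

theorem smul_le_smul_colonSub_smul (I : Ideal R) (N : Submodule R L) :
    I • N ≤ I • colonSub (I • N) I :=
  smul_mono_right I (le_colonSub_smul I N)

end Colon

/-- Let `(R, 𝔪)` be a Noetherian local ring and `M` a submodule of a finitely generated
`R`-module `L` with `𝔪 • M ≠ 0`.  Then `𝔪 • M` is a Burch submodule of `L`. -/
theorem isBurchSubmodule_smul_maximalIdeal {R L : Type*} [CommRing R] [IsLocalRing R]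
    [IsNoetherianRing R] [AddCommGroup L] [Module R L] [Module.Finite R L]
    (M : Submodule R L) (hM : maximalIdeal R • M ≠ ⊥) :
    IsBurchSubmodule (maximalIdeal R • M) := by
  intro hEq
  have hle : maximalIdeal R • M ≤ maximalIdeal R • (maximalIdeal R • M) :=
    hEq ▸ smul_le_smul_colonSub_smul (maximalIdeal R) M
  exact hM <| Submodule.eq_bot_of_le_smul_of_le_jacobson_bot _ _ (IsNoetherian.noetherian _) hle
    (maximalIdeal_le_jacobson ⊥)
end

section
/- Let (R, m) be a Noetherian local ring and 0 → M₁ → M₂ → M₃ → 0 a short exact sequence of finitely generated R-modules, L a finitely generated R-module, and {s,t,u} = {1,2,3}. If m^h · Ext^n_R(L, M_s) = 0 and m^h · Ext^n_R(L, M_t) = 0 for all n ≫ 0 and some h > 0, then m^{2h} · Ext^n_R(L, M_u) = 0 for all n ≫ 0. -/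
open CategoryTheory Filter IsLocalRing

noncomputable section

universe u

variable (R : Type u) [CommRing R]

/-- `Ext^n_R(M, N)` as an `R`-module (underlying type). -/
abbrev ExtMod (M N : Type u) [AddCommGroup M] [Module R M] [AddCommGroup N] [Module R N]
    (n : ℕ) : Type u :=
  ((Ext R (ModuleCat.{u} R) n).obj (Opposite.op (ModuleCat.of R M))).obj (ModuleCat.of R N)

namespace ExtAnnAux

variable {R}

lemma ann_congr {A B : Type u} [AddCommGroup A] [Module R A] [AddCommGroup B]
    [Module R B] (e : A ≃ₗ[R] B) :
    Module.annihilator R A = Module.annihilator R B := by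
  ext r
  simp only [Module.mem_annihilator]
  constructor
  · intro hr b
    obtain ⟨a, rfl⟩ := e.surjective b
    rw [← map_smul, hr, map_zero]
  · intro hr a
    apply e.injective
    rw [map_smul, hr, map_zero]

lemma ann_exact {T : ShortComplex (ModuleCat.{u} R)} (hT : T.Exact) {I J : Ideal R}
    (hI : I ≤ Module.annihilator R T.X₁) (hJ : J ≤ Module.annihilator R T.X₃) :
    I * J ≤ Module.annihilator R T.X₂ := by
  rw [Ideal.mul_le]
  intro a ha b hb
  rw [Module.mem_annihilator]
  intro y
  have h1 : T.g (b • y) = 0 := by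
    rw [map_smul, Module.mem_annihilator.mp (hJ hb) (T.g y)]
  obtain ⟨x, hx⟩ := T.moduleCat_exact_iff.mp hT _ h1
  calc (a * b) • y = a • (b • y) := mul_smul a b y
    _ = a • T.f x := by rw [hx]
    _ = T.f (a • x) := (map_smul T.f.hom a x).symm
    _ = T.f 0 := by rw [Module.mem_annihilator.mp (hI ha) x]
    _ = 0 := map_zero _

end ExtAnnAux

/-- Let `(R, 𝔪)` be a Noetherian local ring, `0 → M₁ → M₂ → M₃ → 0` a short exact sequence
of finitely generated `R`-modules (indexed by `Fin 3`), `L` finitely generated, and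
`{s,t,u} = {1,2,3}`.  If `𝔪^h • Ext^n(L, M_s) = 0` and `𝔪^h • Ext^n(L, M_t) = 0` for all
`n ≫ 0` and some `h > 0`, then `𝔪^{2h} • Ext^n(L, M_u) = 0` for all `n ≫ 0`. -/
theorem ext_annihilator_of_shortExact [IsLocalRing R] [IsNoetherianRing R]
    (M : Fin 3 → Type u) [∀ i, AddCommGroup (M i)] [∀ i, Module R (M i)]
    [∀ i, Module.Finite R (M i)]
    (L : Type u) [AddCommGroup L] [Module R L] [Module.Finite R L]
    (f : M 0 →ₗ[R] M 1) (g : M 1 →ₗ[R] M 2)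
    (hf : Function.Injective f) (hg : Function.Surjective g) (hfg : Function.Exact f g)
    (s t u : Fin 3) (hst : s ≠ t) (htu : t ≠ u) (hsu : s ≠ u)
    (h : ℕ) (hh : 0 < h)
    (hs : ∀ᶠ n in Filter.atTop,
      maximalIdeal R ^ h ≤ Module.annihilator R (ExtMod R L (M s) n))
    (ht : ∀ᶠ n in Filter.atTop,
      maximalIdeal R ^ h ≤ Module.annihilator R (ExtMod R L (M t) n)) :
    ∀ᶠ n in Filter.atTop,
      maximalIdeal R ^ (2 * h) ≤ Module.annihilator R (ExtMod R L (M u) n) := by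
  classical
  let f' : ModuleCat.of R (M 0) ⟶ ModuleCat.of R (M 1) := ModuleCat.ofHom f
  let g' : ModuleCat.of R (M 1) ⟶ ModuleCat.of R (M 2) := ModuleCat.ofHom g
  let P : ProjectiveResolution (ModuleCat.of R L) := ProjectiveResolution.of _
  let K : Fin 3 → CochainComplex (ModuleCat.{u} R) ℕ :=
    fun i => P.complex.linearYonedaObj R (ModuleCat.of R (M i))
  have hfg' : f' ≫ g' = 0 := by
    ext x
    exact hfg.apply_apply_eq_zero x
  let φ : K 0 ⟶ K 1 :=
    { f := fun i => ModuleCat.ofHom (Linear.rightComp R (P.complex.X i) f')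
      comm' := by
        intro i j _
        apply ModuleCat.hom_ext
        apply LinearMap.ext
        intro (x : P.complex.X i ⟶ ModuleCat.of R (M 0))
        show P.complex.d j i ≫ (x ≫ f') = (P.complex.d j i ≫ x) ≫ f'
        rw [Category.assoc] }
  let ψ : K 1 ⟶ K 2 :=
    { f := fun i => ModuleCat.ofHom (Linear.rightComp R (P.complex.X i) g')
      comm' := by
        intro i j _
        apply ModuleCat.hom_ext
        apply LinearMap.ext
        intro (x : P.complex.X i ⟶ ModuleCat.of R (M 1))
        show P.complex.d j i ≫ (x ≫ g') = (P.complex.d j i ≫ x) ≫ g'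
        rw [Category.assoc] }
  let S : ShortComplex (CochainComplex (ModuleCat.{u} R) ℕ) :=
    ShortComplex.mk φ ψ (by
      ext i (x : P.complex.X i ⟶ ModuleCat.of R (M 0))
      show (x ≫ f') ≫ g' = 0
      rw [Category.assoc, hfg', Limits.comp_zero])
  have hses : S.ShortExact := by
    rw [HomologicalComplex.shortExact_iff_degreewise_shortExact]
    intro i
    have hproj : Projective (P.complex.X i) := P.projective i
    have hmono : Mono f' := (ModuleCat.mono_iff_injective f').mpr hf
    have hepi : Epi g' := (ModuleCat.epi_iff_surjective g').mpr hg
    refine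
      { exact := ?_
        mono_f := ?_
        epi_g := ?_ }
    · rw [ShortComplex.moduleCat_exact_iff]
      intro (y : P.complex.X i ⟶ ModuleCat.of R (M 1)) hy
      have hy' : y ≫ g' = 0 := hy
      have hmem : ∀ p, y p ∈ LinearMap.range f := by
        intro p
        obtain ⟨x, hx⟩ := (hfg (y p)).mp (congrArg (fun z => z.hom p) hy')
        exact ⟨x, hx⟩
      let e := LinearEquiv.ofInjective f hf
      let y' : P.complex.X i →ₗ[R] M 0 :=
        (e.symm : LinearMap.range f →ₗ[R] M 0) ∘ₗ
          LinearMap.codRestrict (LinearMap.range f) (y.hom : P.complex.X i →ₗ[R] M 1) hmem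
      refine ⟨(ModuleCat.ofHom y' : P.complex.X i ⟶ ModuleCat.of R (M 0)), ?_⟩
      show ModuleCat.ofHom y' ≫ f' = y
      apply ModuleCat.hom_ext
      apply LinearMap.ext
      intro p
      show f (y' p) = y p
      calc f (y' p) = ↑(e (e.symm ⟨y p, hmem p⟩)) :=
            (LinearEquiv.ofInjective_apply f _).symm
        _ = y p := by rw [e.apply_symm_apply]
    · rw [ModuleCat.mono_iff_injective]
      intro a b hab
      have hab' : (a : P.complex.X i ⟶ ModuleCat.of R (M 0)) ≫ f' = b ≫ f' := hab
      exact (cancel_mono f').mp hab'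
    · rw [ModuleCat.epi_iff_surjective]
      intro (y : P.complex.X i ⟶ ModuleCat.of R (M 2))
      refine ⟨Projective.factorThru y g', ?_⟩
      show Projective.factorThru y g' ≫ g' = y
      exact Projective.factorThru_comp _ _
  have hann : ∀ (i : Fin 3) (n : ℕ),
      Module.annihilator R (ExtMod R L (M i) n) = Module.annihilator R ((K i).homology n) :=
    fun i n => ExtAnnAux.ann_congr (P.isoExt n (ModuleCat.of R (M i))).toLinearEquiv
  rw [Filter.eventually_atTop] at hs ht ⊢
  obtain ⟨N₁, hN₁⟩ := hs
  obtain ⟨N₂, hN₂⟩ := ht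
  have hB : ∀ v : Fin 3, v ≠ u → ∀ k, max N₁ N₂ ≤ k →
      maximalIdeal R ^ h ≤ Module.annihilator R ((K v).homology k) := by
    intro v hv k hk
    have hvs : v = s ∨ v = t :=
      (by decide : ∀ (s t u v : Fin 3), s ≠ t → t ≠ u → s ≠ u → v ≠ u → v = s ∨ v = t)
        s t u v hst htu hsu hv
    rw [← hann]
    rcases hvs with rfl | rfl
    · exact hN₁ k (le_trans (le_max_left _ _) hk)
    · exact hN₂ k (le_trans (le_max_right _ _) hk)
  refine ⟨max N₁ N₂ + 1, fun n hn => ?_⟩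
  have h2 : maximalIdeal R ^ (2 * h) = maximalIdeal R ^ h * maximalIdeal R ^ h := by
    rw [two_mul, pow_add]
  rw [hann u n, h2]
  have hrel : ∀ m : ℕ, (ComplexShape.up ℕ).Rel m (m + 1) := fun m => rfl
  fin_cases u
  · obtain ⟨m, rfl⟩ : ∃ m, n = m + 1 := ⟨n - 1, by omega⟩
    exact ExtAnnAux.ann_exact (hses.homology_exact₁ m (m + 1) (hrel m))
      (hB 2 (by decide) m (by omega)) (hB 1 (by decide) (m + 1) (by omega))
  · exact ExtAnnAux.ann_exact (hses.homology_exact₂ n)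
      (hB 0 (by decide) n (by omega)) (hB 2 (by decide) n (by omega))
  · exact ExtAnnAux.ann_exact (hses.homology_exact₃ n (n + 1) (hrel n))
      (hB 1 (by decide) n (by omega)) (hB 0 (by decide) (n + 1) (by omega))
end
end
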